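/- Let a_1, ..., a_n be positive integers with a_1 ≤ ... ≤ a_n, and k ≤ n/2 a natural number. Then for every subset G ⊆ [n] that is not a ballot set of size at most k (i.e., G either has more than k elements or fails the ballot condition), there exist a set T ⊆ G with T ∈ H_t for some t, or |G| > k; in either case, the family S(a,k) does not shatter G 'fully from both ends': it is impossible that both some F with Σ_{i∈F} a_i = k contains G and some F' with Σ_{i∈F'} a_i = k is disjoint from G ∩ [2t-1] in the relevant window, whenever T ∈ H_t with T ⊆ G. -/

import Mathlib

def Ht (n t : ℕ) (T : Finset ℕ) : Prop :=
  T ⊆ Finset.Icc 1 n ∧ T.card = t ∧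
  (∀ s ∈ T, (T.filter (· ≤ s)).card < t → 2 * (T.filter (· ≤ s)).card ≤ s) ∧
  (∀ s ∈ T, (T.filter (· ≤ s)).card = t → s < 2 * t)

/-!
The shortest non-ballot prefix of a set that is not a ballot set lies in some `H_t`.
For `T ∈ H_t` the ballot condition forces `max T = 2t - 1`, and then the `t - 1` elements of
`[2t-1] \ T` are dominated, from the top down, by elements of `T`. Since `a` is monotone and
positive, every `F' ⊆ [2t-1]` avoiding `T` weighs strictly less than `T`, while every `F ⊇ T`
weighs at least as much, so `F` and `F'` cannot both have weight `k`.
-/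

open Finset

theorem exists_subset_card_eq_sum_le_sum {α β : Type*} [LinearOrder α] [AddCommMonoid β]
    [PartialOrder β] [IsOrderedAddMonoid β] {f : α → β} {S : Set α} (hf : MonotoneOn f S)
    {C T : Finset α} (hC : ↑C ⊆ S) (hT : ↑T ⊆ S)
    (h : ∀ x ∈ C, #(C.filter (x ≤ ·)) ≤ #(T.filter (x ≤ ·))) :
    ∃ T' ⊆ T, #T' = #C ∧ ∑ i ∈ C, f i ≤ ∑ i ∈ T', f i := by
  classical
  induction C using Finset.induction_on_max generalizing T with
  | empty => exact ⟨∅, empty_subset T, rfl, by simp⟩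
  | insert x C hlt ih =>
    -- the largest element `x` of `C` is matched with any `y ∈ T` above it
    have hxC : x ∉ C := fun hx => lt_irrefl x (hlt x hx)
    obtain ⟨y, hy⟩ : (T.filter (x ≤ ·)).Nonempty := by
      rw [← card_pos]
      exact (card_pos.2 ⟨x, by simp⟩).trans_le (h x (mem_insert_self x C))
    obtain ⟨hyT, hxy⟩ := mem_filter.1 hy
    have hC' : ↑C ⊆ S := (coe_subset.2 (subset_insert x C)).trans hC
    obtain ⟨T₀, hT₀, hcard, hsum⟩ := ih hC' ((coe_subset.2 (erase_subset y T)).trans hT)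
      fun x' hx' => by
        have hx'x := hlt x' hx'
        have := h x' (mem_insert_of_mem hx')
        rw [filter_insert, if_pos hx'x.le, card_insert_of_notMem (by simp [hxC])] at this
        have hyx' : y ∈ T.filter (x' ≤ ·) := mem_filter.2 ⟨hyT, hx'x.le.trans hxy⟩
        rw [filter_erase, card_erase_of_mem hyx']
        omega
    have hyT₀ : y ∉ T₀ := fun hy => (mem_erase.1 (hT₀ hy)).1 rfl
    refine ⟨insert y T₀, insert_subset hyT (hT₀.trans (erase_subset y T)), ?_, ?_⟩
    · rw [card_insert_of_notMem hyT₀, card_insert_of_notMem hxC, hcard]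
    · rw [sum_insert hxC, sum_insert hyT₀]
      exact add_le_add (hf (hC (mem_insert_self x C)) (hT hyT) hxy) hsum

namespace Ht

variable {n t : ℕ} {T : Finset ℕ}

theorem two_mul_card_filter_le (h : Ht n t T) {x : ℕ} (hx : #(T.filter (· ≤ x)) < t) :
    2 * #(T.filter (· ≤ x)) ≤ x := by
  rcases (T.filter (· ≤ x)).eq_empty_or_nonempty with he | hne
  · simp [he]
  · obtain ⟨hyT, hyx⟩ := mem_filter.1 (max'_mem _ hne)
    have hfilter : T.filter (· ≤ (T.filter (· ≤ x)).max' hne) = T.filter (· ≤ x) := by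
      ext z
      simp only [mem_filter, and_congr_right_iff]
      exact fun hz => ⟨fun hzy => hzy.trans hyx, fun hzx => le_max' _ z (mem_filter.2 ⟨hz, hzx⟩)⟩
    have := h.2.2.1 _ hyT (by rwa [hfilter])
    rw [hfilter] at this
    omega

theorem max'_eq (h : Ht n t T) (hne : T.Nonempty) : T.max' hne = 2 * t - 1 := by
  set M := T.max' hne
  have hMT : M ∈ T := max'_mem T hne
  have hM1 : 1 ≤ M := (mem_Icc.1 (h.1 hMT)).1
  have hlt : M < 2 * t :=
    h.2.2.2 M hMT (by rw [filter_true_of_mem fun z hz => le_max' T z hz, h.2.1])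
  have hbelow : T.filter (· ≤ M - 1) = T.erase M := by
    ext z
    simp only [mem_filter, mem_erase]
    have := fun hz : z ∈ T => le_max' T z hz
    constructor
    · rintro ⟨hz, hzM⟩
      exact ⟨by omega, hz⟩
    · rintro ⟨hzM, hz⟩
      exact ⟨hz, by have := this hz; omega⟩
  have hcard : #(T.filter (· ≤ M - 1)) = t - 1 := by
    rw [hbelow, card_erase_of_mem hMT, h.2.1]
  have := h.two_mul_card_filter_le (x := M - 1)
    (by rw [hcard]; have := hne.card_pos; have := h.2.1; omega)
  rw [hcard] at this
  omega

theorem two_mul_sub_one_mem (h : Ht n t T) (ht : 0 < t) : 2 * t - 1 ∈ T := by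
  have hne : T.Nonempty := card_pos.1 (h.2.1 ▸ ht)
  exact h.max'_eq hne ▸ max'_mem T hne

theorem subset_Icc (h : Ht n t T) : T ⊆ Icc 1 (2 * t - 1) := fun z hz =>
  mem_Icc.2 ⟨(mem_Icc.1 (h.1 hz)).1, h.max'_eq ⟨z, hz⟩ ▸ le_max' T z hz⟩

theorem card_filter_le_of_mem_sdiff (h : Ht n t T) (ht : 0 < t) {x : ℕ}
    (hx : x ∈ Icc 1 (2 * t - 1) \ T) :
    #((Icc 1 (2 * t - 1) \ T).filter (x ≤ ·)) ≤ #(T.filter (x ≤ ·)) := by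
  obtain ⟨hxI, hxT⟩ := mem_sdiff.1 hx
  obtain ⟨hx1, hx2⟩ := mem_Icc.1 hxI
  have htotal : #((Icc 1 (2 * t - 1) \ T).filter (x ≤ ·)) + #(T.filter (x ≤ ·)) = 2 * t - x := by
    rw [← card_union_of_disjoint (disjoint_filter_filter sdiff_disjoint), ← filter_union,
      sdiff_union_of_subset h.subset_Icc]
    have : (Icc 1 (2 * t - 1)).filter (x ≤ ·) = Icc x (2 * t - 1) := by
      ext z
      simp only [mem_filter, mem_Icc]
      omega
    rw [this, Nat.card_Icc]
    omega
  have hsplit : #(T.filter (· ≤ x)) + #(T.filter (x ≤ ·)) = t := by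
    rw [← h.2.1, ← card_filter_add_card_filter_not (s := T) (· ≤ x)]
    congr 2
    refine filter_congr fun z hz => ?_
    have : z ≠ x := fun hzx => hxT (hzx ▸ hz)
    omega
  have htop : 2 * t - 1 ∈ T.filter (x ≤ ·) :=
    mem_filter.2 ⟨h.two_mul_sub_one_mem ht, hx2⟩
  have := h.two_mul_card_filter_le (x := x) (by have := card_pos.2 ⟨_, htop⟩; omega)
  omega

theorem sum_lt_of_disjoint (h : Ht n t T) (ht : 0 < t) {a : ℕ → ℕ} (hpos : ∀ i ∈ T, 0 < a i)
    (hmono : MonotoneOn a (Set.Icc 1 (2 * t - 1))) {F : Finset ℕ} (hF : F ⊆ Icc 1 (2 * t - 1))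
    (hFT : Disjoint F T) : ∑ i ∈ F, a i < ∑ i ∈ T, a i := by
  set C := Icc 1 (2 * t - 1) \ T
  have hCI : ↑C ⊆ Set.Icc 1 (2 * t - 1) := by
    rw [← coe_Icc]
    exact coe_subset.2 sdiff_subset
  have hTI : ↑T ⊆ Set.Icc 1 (2 * t - 1) := by
    rw [← coe_Icc]
    exact coe_subset.2 h.subset_Icc
  obtain ⟨T', hT'T, hT'C, hCT'⟩ :=
    exists_subset_card_eq_sum_le_sum hmono hCI hTI fun x hx => h.card_filter_le_of_mem_sdiff ht hx
  have hcard : #T' < #T := by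
    rw [hT'C, card_sdiff_of_subset h.subset_Icc, Nat.card_Icc, h.2.1]
    omega
  obtain ⟨z, hzT, hzT'⟩ := exists_of_ssubset (ssubset_of_subset_of_ne hT'T (by rintro rfl; omega))
  calc ∑ i ∈ F, a i ≤ ∑ i ∈ C, a i := sum_le_sum_of_subset (subset_sdiff.2 ⟨hF, hFT⟩)
    _ ≤ ∑ i ∈ T', a i := hCT'
    _ < ∑ i ∈ T, a i := sum_lt_sum_of_subset hT'T hzT hzT' (hpos z hzT) fun _ _ _ => zero_le

end Ht

def IsBallot (G : Finset ℕ) : Prop := ∀ s ∈ G, 2 * #(G.filter (· ≤ s)) ≤ s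

theorem exists_ht_subset_of_not_isBallot {n : ℕ} {G : Finset ℕ} (hG : G ⊆ Icc 1 n)
    (hb : ¬ IsBallot G) : ∃ t, 0 < t ∧ ∃ T, Ht n t T ∧ T ⊆ G := by
  classical
  simp only [IsBallot, not_forall, not_le, exists_prop] at hb
  obtain ⟨hsG, hsbad⟩ := Nat.find_spec hb
  set s := Nat.find hb
  have hprefix : ∀ s' ≤ s, (G.filter (· ≤ s)).filter (· ≤ s') = G.filter (· ≤ s') := by
    intro s' hs'
    rw [filter_filter]
    exact filter_congr fun z _ => ⟨fun hz => hz.2, fun hz => ⟨hz.trans hs', hz⟩⟩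
  have hsT : s ∈ G.filter (· ≤ s) := mem_filter.2 ⟨hsG, le_rfl⟩
  refine ⟨_, card_pos.2 ⟨s, hsT⟩, _, ⟨(filter_subset _ G).trans hG, rfl, ?_, ?_⟩, filter_subset _ G⟩
  · intro s' hs' hlt
    obtain ⟨hs'G, hs's⟩ := mem_filter.1 hs'
    rw [hprefix s' hs's] at hlt ⊢
    have hne : s' ≠ s := by rintro rfl; exact lt_irrefl _ hlt
    by_contra hgood
    exact hne (le_antisymm hs's (Nat.find_min' hb ⟨hs'G, not_le.1 hgood⟩))
  · intro s' hs' _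
    have := (mem_filter.1 hs').2
    omega

theorem stmt17_general (n k : ℕ) (a : ℕ → ℕ)
    (hpos : ∀ i ∈ Finset.Icc 1 n, 0 < a i)
    (hmono : ∀ i j, 1 ≤ i → i ≤ j → j ≤ n → a i ≤ a j)
    (G : Finset ℕ) (hG : G ⊆ Finset.Icc 1 n)
    (hnb : ¬ (G.card ≤ k ∧ ∀ s ∈ G, 2 * (G.filter (· ≤ s)).card ≤ s)) :
    (k < G.card ∨ ∃ t : ℕ, 0 < t ∧ ∃ T : Finset ℕ, Ht n t T ∧ T ⊆ G) ∧
    (∀ t : ℕ, 0 < t → ∀ T : Finset ℕ, Ht n t T → T ⊆ G →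
      ¬ ((∃ F, F ⊆ Finset.Icc 1 n ∧ (∑ i ∈ F, a i) = k ∧ G ⊆ F) ∧
         (∃ F', F' ⊆ Finset.Icc 1 (2 * t - 1) ∧ (∑ i ∈ F', a i) = k ∧
            F' ∩ (G ∩ Finset.Icc 1 (2 * t - 1)) = ∅))) := by
  refine ⟨?_, ?_⟩
  · rcases lt_or_ge k G.card with hlt | hle
    · exact Or.inl hlt
    · exact Or.inr (exists_ht_subset_of_not_isBallot hG fun hb => hnb ⟨hle, hb⟩)
  · rintro t ht T hT hTG ⟨⟨F, -, hF, hGF⟩, ⟨F', hF'I, hF', hF'G⟩⟩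
    have htop : 2 * t - 1 ≤ n := (mem_Icc.1 (hT.1 (hT.two_mul_sub_one_mem ht))).2
    have hmonoOn : MonotoneOn a (Set.Icc 1 (2 * t - 1)) :=
      fun i hi j hj hij => hmono i j hi.1 hij (hj.2.trans htop)
    have hF'T : Disjoint F' T := disjoint_left.2 fun z hzF' hzT =>
      notMem_empty z (hF'G ▸ mem_inter.2 ⟨hzF', mem_inter.2 ⟨hTG hzT, hF'I hzF'⟩⟩)
    have hlt := hT.sum_lt_of_disjoint ht (fun i hi => hpos i (hT.1 hi)) hmonoOn hF'I hF'T
    have hle : ∑ i ∈ T, a i ≤ ∑ i ∈ F, a i := sum_le_sum_of_subset (hTG.trans hGF)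
    omega

/-- let `a₁ ≤ … ≤ a_n` be positive integers and `k ≤ n/2`.
If `G ⊆ [n]` is not a ballot set of size at most `k`, then either `|G| > k`
or some `T ∈ H_t` is contained in `G`; moreover, whenever `T ∈ H_t` with
`T ⊆ G`, it is impossible that both some `F` of weight `k` contains `G` and
some `F'` of weight `k` inside the window `[2t-1]` is disjoint from
`G ∩ [2t-1]`. -/
theorem stmt17 (n k : ℕ) (a : ℕ → ℕ)
    (hpos : ∀ i ∈ Finset.Icc 1 n, 0 < a i)
    (hmono : ∀ i j, 1 ≤ i → i ≤ j → j ≤ n → a i ≤ a j)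
    (hk : 2 * k ≤ n) (G : Finset ℕ) (hG : G ⊆ Finset.Icc 1 n)
    (hnb : ¬ (G.card ≤ k ∧ ∀ s ∈ G, 2 * (G.filter (· ≤ s)).card ≤ s)) :
    (k < G.card ∨ ∃ t : ℕ, 0 < t ∧ ∃ T : Finset ℕ, Ht n t T ∧ T ⊆ G) ∧
    (∀ t : ℕ, 0 < t → ∀ T : Finset ℕ, Ht n t T → T ⊆ G →
      ¬ ((∃ F, F ⊆ Finset.Icc 1 n ∧ (∑ i ∈ F, a i) = k ∧ G ⊆ F) ∧
         (∃ F', F' ⊆ Finset.Icc 1 (2 * t - 1) ∧ (∑ i ∈ F', a i) = k ∧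
            F' ∩ (G ∩ Finset.Icc 1 (2 * t - 1)) = ∅))) :=
  stmt17_general n k a hpos hmono G hG hnb
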